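/- arXiv:1105.0133 — 3 statements merged into one kernel-verified Lean document; each statement's English description precedes it below -/
import Mathlib

section
/- Let N ≥ 1, let the settings be a ∈ {0,2,4,…,2N−2} and b ∈ {1,3,5,…,2N−1}, let c range over a finite set, and let X, Y ∈ {+1,−1} and Z range over a finite set. Suppose P_{XYZ|ABC} is a family of probability distributions on triples (x,y,z) indexed by settings (a,b,c) that satisfies the non-signalling conditions: the marginal of (X,Y) given (a,b,c) does not depend on c, the marginal of (X,Z) given (a,b,c) does not depend on b, and the marginal of (Y,Z) given (a,b,c) does not depend on a. Then for all settings a, b, c and every outcome x with P(X=x|a,b,c) > 0, the variational distance between the conditional distribution P_{Z|a,b,c,X=x} and the distribution P_{Z|a,b,c} is at most I_N/2 + ν_N, where I_N is the chained-Bell quantity of the two-party marginal P_{XY|AB} and ν_N is its maximal single-party bias. -/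
noncomputable section

open Finset

/-- The two outcomes `+1` and `-1`. -/
def pm : Finset ℤ := {1, -1}

/-- Settings on side A: `{0, 2, 4, …, 2N-2}`. -/
def SA (N : ℕ) : Finset ℕ := (Finset.range N).image (fun k => 2 * k)

/-- Settings on side B: `{1, 3, 5, …, 2N-1}`. -/
def SB (N : ℕ) : Finset ℕ := (Finset.range N).image (fun k => 2 * k + 1)

section
variable {C Z : Type} [Fintype Z]

/-- Marginal distribution of `(X, Y)` given settings `(a, b, c)`. -/
def PXY (P : ℕ → ℕ → C → ℤ → ℤ → Z → ℝ) (a b : ℕ) (c : C) (x y : ℤ) : ℝ :=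
  ∑ z, P a b c x y z

/-- Marginal distribution of `X` given settings `(a, b, c)`. -/
def PX (P : ℕ → ℕ → C → ℤ → ℤ → Z → ℝ) (a b : ℕ) (c : C) (x : ℤ) : ℝ :=
  ∑ y ∈ pm, ∑ z, P a b c x y z

/-- Marginal distribution of `Z` given settings `(a, b, c)`. -/
def PZ (P : ℕ → ℕ → C → ℤ → ℤ → Z → ℝ) (a b : ℕ) (c : C) (z : Z) : ℝ :=
  ∑ x ∈ pm, ∑ y ∈ pm, P a b c x y z

/-- Conditional distribution of `Z` given settings `(a, b, c)` and outcome `X = x`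
(defined by Bayes' rule). -/
def PZcond (P : ℕ → ℕ → C → ℤ → ℤ → Z → ℝ) (a b : ℕ) (c : C) (x : ℤ)
    (z : Z) : ℝ :=
  (∑ y ∈ pm, P a b c x y z) / PX P a b c x

/-- Variational distance between two finitely supported distributions. -/
def varDist {Ω : Type} [Fintype Ω] (P Q : Ω → ℝ) : ℝ :=
  (1 / 2) * ∑ ω, |P ω - Q ω|

/-- Probability that `X = Y` given settings `(a, b, c)`. -/
def Pagree (P : ℕ → ℕ → C → ℤ → ℤ → Z → ℝ) (a b : ℕ) (c : C) : ℝ :=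
  PXY P a b c 1 1 + PXY P a b c (-1) (-1)

/-- Probability that `X ≠ Y` given settings `(a, b, c)`. -/
def Pdiff (P : ℕ → ℕ → C → ℤ → ℤ → Z → ℝ) (a b : ℕ) (c : C) : ℝ :=
  PXY P a b c 1 (-1) + PXY P a b c (-1) 1

/-- Chained-Bell quantity `I_N` of the two-party marginal, computed at setting `c`:
`I_N = P(X=Y | A=0, B=2N-1) + ∑_{a,b : |a-b|=1} P(X≠Y | A=a, B=b)`. -/
def IN (P : ℕ → ℕ → C → ℤ → ℤ → Z → ℝ) (N : ℕ) (c : C) : ℝ :=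
  Pagree P 0 (2 * N - 1) c +
    ∑ p ∈ (SA N ×ˢ SB N).filter (fun p => p.1 + 1 = p.2 ∨ p.2 + 1 = p.1),
      Pdiff P p.1 p.2 c

/-- Bias `ν_N`: the maximum over `a` of the variational distance between the marginal
distribution of `X` given setting `a` and the uniform distribution on `{+1, -1}`. -/
def biasN (P : ℕ → ℕ → C → ℤ → ℤ → Z → ℝ) (N : ℕ) (b : ℕ) (c : C) : ℝ :=
  ⨆ a ∈ SA N, (1 / 2) * (|PX P a b c 1 - 1 / 2| + |PX P a b c (-1) - 1 / 2|)

end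

/-!
Let `μ_x` be the weight of `Z` jointly with `X = x`, and `λ_y` that of `Z` jointly with `Y = y`.
By no-signalling `μ_x` depends only on Alice's setting and `λ_y` only on Bob's. Along the chain
of settings `a, a + 1, …, 2N - 1, 0, 1, …, a`, alternate between `μ_x` and `λ_x`, switching to
`μ_{-x}` and `λ_{-x}` across the closing edge `(0, 2N - 1)`. Each step moves the weight in `ℓ¹` by
at most `P(X ≠ Y)` at that pair of settings (`P(X = Y)` on the closing edge), so `μ_x` and
`μ_{-x}` are within variational distance `I_N / 2`. Bayes' rule gives
`P_{Z|x} - P_Z = (μ_x - μ_{-x}) + (1/p - 2) μ_x` with `p = P(X = x)`, and the second term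
contributes `|p - 1/2|`, the bias of setting `a`.
-/

lemma neg_mem_pm {x : ℤ} (hx : x ∈ pm) : -x ∈ pm := by
  simp only [pm, mem_insert, mem_singleton] at hx ⊢
  omega

lemma sum_pm_eq_add_neg {x : ℤ} (hx : x ∈ pm) (f : ℤ → ℝ) :
    ∑ y ∈ pm, f y = f x + f (-x) := by
  simp only [pm, mem_insert, mem_singleton] at hx
  rw [pm, sum_pair (by norm_num)]
  rcases hx with rfl | rfl
  · rfl
  · rw [neg_neg, add_comm]

lemma mem_SA_iff {N s : ℕ} : s ∈ SA N ↔ s % 2 = 0 ∧ s < 2 * N := by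
  simp only [SA, mem_image, mem_range]
  constructor
  · rintro ⟨k, hk, rfl⟩; omega
  · rintro ⟨h1, h2⟩; exact ⟨s / 2, by omega, by omega⟩

lemma mem_SB_iff {N s : ℕ} : s ∈ SB N ↔ s % 2 = 1 ∧ s < 2 * N := by
  simp only [SB, mem_image, mem_range]
  constructor
  · rintro ⟨k, hk, rfl⟩; omega
  · rintro ⟨h1, h2⟩; exact ⟨s / 2, by omega, by omega⟩

lemma one_le_of_mem_SA {N s : ℕ} (hs : s ∈ SA N) : 1 ≤ N := by
  have := (mem_SA_iff.1 hs).2; omega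

lemma one_le_of_mem_SB {N s : ℕ} (hs : s ∈ SB N) : 1 ≤ N := by
  have := (mem_SB_iff.1 hs).2; omega

lemma le_biSup_of_mem_finset {ι : Type*} {f : ι → ℝ} {s : Finset ι} {i : ι} (hi : i ∈ s) :
    f i ≤ ⨆ j ∈ s, f j := by
  refine le_ciSup₂ (f := fun j (_ : j ∈ s) => f j) ?_ i hi
  refine ((s : Set ι).toFinite.image f).bddAbove.mono ?_
  rintro _ ⟨_, ⟨j, rfl⟩, hj, rfl⟩
  exact ⟨j, hj, rfl⟩

def adjPair (s : ℕ) : ℕ × ℕ := if s % 2 = 0 then (s, s + 1) else (s + 1, s)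

lemma sum_adjacent_eq_sum_adjPair (N : ℕ) (f : ℕ → ℕ → ℝ) :
    ∑ p ∈ (SA N ×ˢ SB N).filter (fun p => p.1 + 1 = p.2 ∨ p.2 + 1 = p.1), f p.1 p.2 =
      ∑ s ∈ range (2 * N - 1), f (adjPair s).1 (adjPair s).2 := by
  symm
  refine sum_nbij' adjPair (fun p => min p.1 p.2) ?_ ?_ ?_ ?_ (fun _ _ => rfl)
  all_goals
    simp only [mem_filter, mem_product, mem_range, mem_SA_iff, mem_SB_iff, adjPair, Prod.forall]
    intros
    (try split_ifs) <;> (try dsimp only) <;> (try rw [Prod.mk.injEq]) <;> omega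

section VarDist

variable {Ω : Type} [Fintype Ω]

lemma varDist_comm (f g : Ω → ℝ) : varDist f g = varDist g f := by
  simp only [varDist, abs_sub_comm]

lemma varDist_triangle (f g h : Ω → ℝ) : varDist f h ≤ varDist f g + varDist g h := by
  simp only [varDist, ← mul_add, ← sum_add_distrib]
  gcongr with ω
  exact abs_sub_le _ _ _

lemma varDist_le_sum_Ico (f : ℕ → Ω → ℝ) {m n : ℕ} (hmn : m ≤ n) :
    varDist (f m) (f n) ≤ ∑ i ∈ Ico m n, varDist (f i) (f (i + 1)) := by
  induction n, hmn using Nat.le_induction with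
  | base => simp [varDist]
  | succ n hmn ih =>
    rw [sum_Ico_succ_top hmn]
    linarith [varDist_triangle (f m) (f n) (f (n + 1))]

lemma varDist_le_of_sub_eq_sub {f g u v : Ω → ℝ} (hu : ∀ ω, 0 ≤ u ω) (hv : ∀ ω, 0 ≤ v ω)
    (h : ∀ ω, f ω - g ω = u ω - v ω) : varDist f g ≤ (∑ ω, (u ω + v ω)) / 2 := by
  rw [varDist, one_div_mul_eq_div]
  gcongr with ω
  rw [h, abs_le]
  constructor <;> linarith [hu ω, hv ω]

lemma varDist_div_add_le {f g : Ω → ℝ} {p : ℝ} (hf : ∀ ω, 0 ≤ f ω) (hfp : ∑ ω, f ω = p)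
    (hp : 0 < p) :
    varDist (fun ω => f ω / p) (fun ω => f ω + g ω) ≤ varDist f g + |p - 1 / 2| := by
  have hsplit (ω : Ω) : f ω / p - (f ω + g ω) = (f ω - g ω) + (1 / p - 2) * f ω := by
    field_simp; ring
  have hweight : ∑ ω, |(1 / p - 2) * f ω| = 2 * |p - 1 / 2| :=
    calc ∑ ω, |(1 / p - 2) * f ω| = |(1 / p - 2) * p| := by
          simp only [abs_mul, abs_of_nonneg (hf _), ← mul_sum, hfp, abs_of_pos hp]
      _ = 2 * |p - 1 / 2| := by
          rw [show (1 / p - 2) * p = -2 * (p - 1 / 2) by field_simp; ring, abs_mul]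
          norm_num
  calc varDist (fun ω => f ω / p) (fun ω => f ω + g ω)
      = 1 / 2 * ∑ ω, |(f ω - g ω) + (1 / p - 2) * f ω| := by simp only [varDist, hsplit]
    _ ≤ 1 / 2 * ∑ ω, (|f ω - g ω| + |(1 / p - 2) * f ω|) := by
        gcongr with ω
        exact abs_add_le _ _
    _ = varDist f g + |p - 1 / 2| := by
        rw [sum_add_distrib, hweight, varDist]
        ring

end VarDist

section NonSignalling

variable {C Z : Type}

def PXZ (P : ℕ → ℕ → C → ℤ → ℤ → Z → ℝ) (a b : ℕ) (c : C) (x : ℤ) (z : Z) : ℝ :=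
  ∑ y ∈ pm, P a b c x y z

def PYZ (P : ℕ → ℕ → C → ℤ → ℤ → Z → ℝ) (a b : ℕ) (c : C) (y : ℤ) (z : Z) : ℝ :=
  ∑ x ∈ pm, P a b c x y z

def NonnegOnSettings (N : ℕ) (P : ℕ → ℕ → C → ℤ → ℤ → Z → ℝ) : Prop :=
  ∀ a ∈ SA N, ∀ b ∈ SB N, ∀ (c : C), ∀ x ∈ pm, ∀ y ∈ pm, ∀ z : Z, 0 ≤ P a b c x y z

def NoSignallingFromA (N : ℕ) (P : ℕ → ℕ → C → ℤ → ℤ → Z → ℝ) : Prop :=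
  ∀ a ∈ SA N, ∀ a' ∈ SA N, ∀ b ∈ SB N, ∀ (c : C), ∀ y ∈ pm, ∀ z : Z,
    PYZ P a b c y z = PYZ P a' b c y z

def NoSignallingFromB (N : ℕ) (P : ℕ → ℕ → C → ℤ → ℤ → Z → ℝ) : Prop :=
  ∀ a ∈ SA N, ∀ b ∈ SB N, ∀ b' ∈ SB N, ∀ (c : C), ∀ x ∈ pm, ∀ z : Z,
    PXZ P a b c x z = PXZ P a b' c x z

def NoSignallingFromC [Fintype Z] (N : ℕ) (P : ℕ → ℕ → C → ℤ → ℤ → Z → ℝ) : Prop :=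
  ∀ a ∈ SA N, ∀ b ∈ SB N, ∀ (c c' : C), ∀ x ∈ pm, ∀ y ∈ pm,
    PXY P a b c x y = PXY P a b c' x y

/-- The weight of `Z` jointly with outcome `x` at Alice's setting `s` (even `s`) or at Bob's
setting `s` (odd `s`); by no-signalling the partner settings `1` and `0` are arbitrary. -/
def chainNode (P : ℕ → ℕ → C → ℤ → ℤ → Z → ℝ) (c : C) (x : ℤ) (s : ℕ) : Z → ℝ :=
  if s % 2 = 0 then PXZ P s 1 c x else PYZ P 0 s c x

variable {N : ℕ} {P : ℕ → ℕ → C → ℤ → ℤ → Z → ℝ}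

lemma chainNode_of_mem_SA (hB : NoSignallingFromB N P) (c : C) {x : ℤ} (hx : x ∈ pm) {s b : ℕ}
    (hs : s ∈ SA N) (hb : b ∈ SB N) : chainNode P c x s = PXZ P s b c x := by
  have h1 : 1 ∈ SB N := mem_SB_iff.2 ⟨rfl, by have := one_le_of_mem_SB hb; omega⟩
  rw [chainNode, if_pos (mem_SA_iff.1 hs).1]
  exact funext (hB s hs 1 h1 b hb c x hx)

lemma chainNode_of_mem_SB (hA : NoSignallingFromA N P) (c : C) {x : ℤ} (hx : x ∈ pm) {s a : ℕ}
    (hs : s ∈ SB N) (ha : a ∈ SA N) : chainNode P c x s = PYZ P a s c x := by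
  have h0 : 0 ∈ SA N := mem_SA_iff.2 ⟨rfl, by have := one_le_of_mem_SA ha; omega⟩
  rw [chainNode, if_neg (by rw [(mem_SB_iff.1 hs).1]; decide)]
  exact funext (hA 0 h0 a ha s hs c x hx)

variable [Fintype Z]

lemma Pdiff_eq_sum {a b : ℕ} (c : C) {x : ℤ} (hx : x ∈ pm) :
    Pdiff P a b c = ∑ z, (P a b c x (-x) z + P a b c (-x) x z) := by
  simp only [pm, mem_insert, mem_singleton] at hx
  rw [sum_add_distrib, Pdiff, PXY, PXY]
  rcases hx with rfl | rfl
  · rfl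
  · rw [neg_neg, add_comm]

lemma Pagree_eq_sum {a b : ℕ} (c : C) {x : ℤ} (hx : x ∈ pm) :
    Pagree P a b c = ∑ z, (P a b c x x z + P a b c (-x) (-x) z) := by
  simp only [pm, mem_insert, mem_singleton] at hx
  rw [sum_add_distrib, Pagree, PXY, PXY]
  rcases hx with rfl | rfl
  · rfl
  · rw [neg_neg, add_comm]

lemma varDist_PXZ_PYZ_le (hP : NonnegOnSettings N P) {a b : ℕ} (ha : a ∈ SA N) (hb : b ∈ SB N)
    (c : C) {x : ℤ} (hx : x ∈ pm) :
    varDist (PXZ P a b c x) (PYZ P a b c x) ≤ Pdiff P a b c / 2 := by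
  rw [Pdiff_eq_sum c hx]
  refine varDist_le_of_sub_eq_sub (hP a ha b hb c x hx _ (neg_mem_pm hx))
    (hP a ha b hb c _ (neg_mem_pm hx) x hx) fun z => ?_
  rw [PXZ, PYZ, sum_pm_eq_add_neg hx, sum_pm_eq_add_neg hx]
  ring

lemma varDist_PYZ_PXZ_neg_le (hP : NonnegOnSettings N P) {a b : ℕ} (ha : a ∈ SA N)
    (hb : b ∈ SB N) (c : C) {x : ℤ} (hx : x ∈ pm) :
    varDist (PYZ P a b c x) (PXZ P a b c (-x)) ≤ Pagree P a b c / 2 := by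
  rw [Pagree_eq_sum c hx]
  refine varDist_le_of_sub_eq_sub (hP a ha b hb c x hx x hx)
    (hP a ha b hb c _ (neg_mem_pm hx) _ (neg_mem_pm hx)) fun z => ?_
  rw [PXZ, PYZ, sum_pm_eq_add_neg hx, sum_pm_eq_add_neg (neg_mem_pm hx), neg_neg]
  ring

lemma varDist_chainNode_succ_le (hP : NonnegOnSettings N P) (hA : NoSignallingFromA N P)
    (hB : NoSignallingFromB N P) (c : C) {x : ℤ} (hx : x ∈ pm) {s : ℕ} (hs : s + 1 < 2 * N) :
    varDist (chainNode P c x s) (chainNode P c x (s + 1)) ≤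
      Pdiff P (adjPair s).1 (adjPair s).2 c / 2 := by
  rcases Nat.mod_two_eq_zero_or_one s with h | h
  · have hsA : s ∈ SA N := mem_SA_iff.2 ⟨h, by omega⟩
    have hs1B : s + 1 ∈ SB N := mem_SB_iff.2 ⟨by omega, hs⟩
    simp only [adjPair, if_pos h]
    rw [chainNode_of_mem_SA hB c hx hsA hs1B, chainNode_of_mem_SB hA c hx hs1B hsA]
    exact varDist_PXZ_PYZ_le hP hsA hs1B c hx
  · have hsB : s ∈ SB N := mem_SB_iff.2 ⟨h, by omega⟩
    have hs1A : s + 1 ∈ SA N := mem_SA_iff.2 ⟨by omega, hs⟩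
    simp only [adjPair, if_neg (by omega : ¬s % 2 = 0)]
    rw [chainNode_of_mem_SB hA c hx hsB hs1A, chainNode_of_mem_SA hB c hx hs1A hsB, varDist_comm]
    exact varDist_PXZ_PYZ_le hP hs1A hsB c hx

lemma varDist_chainNode_wrap_le (hP : NonnegOnSettings N P) (hA : NoSignallingFromA N P)
    (hB : NoSignallingFromB N P) (hN : 1 ≤ N) (c : C) {x : ℤ} (hx : x ∈ pm) :
    varDist (chainNode P c x (2 * N - 1)) (chainNode P c (-x) 0) ≤
      Pagree P 0 (2 * N - 1) c / 2 := by
  have h0 : 0 ∈ SA N := mem_SA_iff.2 ⟨rfl, by omega⟩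
  have hlast : 2 * N - 1 ∈ SB N := mem_SB_iff.2 ⟨by omega, by omega⟩
  rw [chainNode_of_mem_SB hA c hx hlast h0, chainNode_of_mem_SA hB c (neg_mem_pm hx) h0 hlast]
  exact varDist_PYZ_PXZ_neg_le hP h0 hlast c hx

lemma IN_eq_Pagree_add_sum (N : ℕ) (c : C) :
    IN P N c = Pagree P 0 (2 * N - 1) c +
      ∑ s ∈ range (2 * N - 1), Pdiff P (adjPair s).1 (adjPair s).2 c := by
  rw [IN, sum_adjacent_eq_sum_adjPair N (fun a b => Pdiff P a b c)]

lemma varDist_chainNode_neg_le (hP : NonnegOnSettings N P) (hA : NoSignallingFromA N P)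
    (hB : NoSignallingFromB N P) (c : C) {x : ℤ} (hx : x ∈ pm) {a : ℕ} (ha : a ∈ SA N) :
    varDist (chainNode P c x a) (chainNode P c (-x) a) ≤ IN P N c / 2 := by
  obtain ⟨-, haN⟩ := mem_SA_iff.1 ha
  set edge := fun s => Pdiff P (adjPair s).1 (adjPair s).2 c / 2
  have path : ∀ y ∈ pm, ∀ m n, m ≤ n → n ≤ 2 * N - 1 →
      varDist (chainNode P c y m) (chainNode P c y n) ≤ ∑ s ∈ Ico m n, edge s :=
    fun y hy m n hmn hn => (varDist_le_sum_Ico _ hmn).trans <| sum_le_sum fun s hs =>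
      varDist_chainNode_succ_le hP hA hB c hy (by rw [mem_Ico] at hs; omega)
  calc varDist (chainNode P c x a) (chainNode P c (-x) a)
      ≤ varDist (chainNode P c x a) (chainNode P c x (2 * N - 1)) +
          varDist (chainNode P c x (2 * N - 1)) (chainNode P c (-x) 0) +
          varDist (chainNode P c (-x) 0) (chainNode P c (-x) a) := by
        linarith [varDist_triangle (chainNode P c x a) (chainNode P c x (2 * N - 1))
            (chainNode P c (-x) a),
          varDist_triangle (chainNode P c x (2 * N - 1)) (chainNode P c (-x) 0)
            (chainNode P c (-x) a)]
    _ ≤ ∑ s ∈ Ico a (2 * N - 1), edge s + Pagree P 0 (2 * N - 1) c / 2 +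
          ∑ s ∈ Ico 0 a, edge s := by
        gcongr
        · exact path x hx a _ (by omega) le_rfl
        · exact varDist_chainNode_wrap_le hP hA hB (by omega) c hx
        · exact path (-x) (neg_mem_pm hx) 0 a (Nat.zero_le a) (by omega)
    _ = IN P N c / 2 := by
        rw [IN_eq_Pagree_add_sum, add_right_comm, add_comm (∑ s ∈ Ico a _, edge s),
          sum_Ico_consecutive _ (Nat.zero_le a) (by omega), ← range_eq_Ico, ← sum_div]
        ring

lemma IN_congr_right (hC : NoSignallingFromC N P) (hN : 1 ≤ N) (c c' : C) :
    IN P N c = IN P N c' := by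
  have hpm1 : (1 : ℤ) ∈ pm := by simp [pm]
  have hpm1' : (-1 : ℤ) ∈ pm := by simp [pm]
  have h0 : 0 ∈ SA N := mem_SA_iff.2 ⟨rfl, by omega⟩
  have hlast : 2 * N - 1 ∈ SB N := mem_SB_iff.2 ⟨by omega, by omega⟩
  rw [IN, IN, Pagree, Pagree, hC 0 h0 _ hlast c c' 1 hpm1 1 hpm1,
    hC 0 h0 _ hlast c c' (-1) hpm1' (-1) hpm1']
  congr 1
  refine sum_congr rfl fun p hp => ?_
  obtain ⟨hp1, hp2⟩ := mem_product.1 (mem_filter.1 hp).1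
  rw [Pdiff, Pdiff, hC _ hp1 _ hp2 c c' 1 hpm1 (-1) hpm1', hC _ hp1 _ hp2 c c' (-1) hpm1' 1 hpm1]

lemma sum_PXZ_eq_PX (a b : ℕ) (c : C) (x : ℤ) : ∑ z, PXZ P a b c x z = PX P a b c x := by
  simp only [PXZ, PX]
  exact sum_comm

lemma PX_congr (hB : NoSignallingFromB N P) (hC : NoSignallingFromC N P) {a b b' : ℕ}
    (ha : a ∈ SA N) (hb : b ∈ SB N) (hb' : b' ∈ SB N) (c c' : C) {x : ℤ} (hx : x ∈ pm) :
    PX P a b c x = PX P a b' c' x := by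
  calc PX P a b c x = ∑ y ∈ pm, PXY P a b c x y := rfl
    _ = ∑ y ∈ pm, PXY P a b c' x y := sum_congr rfl fun y hy => hC a ha b hb c c' x hx y hy
    _ = ∑ z, PXZ P a b c' x z := by simp only [PXY, PXZ]; exact sum_comm
    _ = ∑ z, PXZ P a b' c' x z := sum_congr rfl fun z _ => hB a ha b hb b' hb' c' x hx z
    _ = PX P a b' c' x := sum_PXZ_eq_PX a b' c' x

lemma abs_PX_sub_half_le_biasN {a b : ℕ} (ha : a ∈ SA N) (c : C)
    (hsum : ∑ x ∈ pm, ∑ y ∈ pm, ∑ z, P a b c x y z = 1) {x : ℤ} (hx : x ∈ pm) :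
    |PX P a b c x - 1 / 2| ≤ biasN P N b c := by
  have htotal : PX P a b c x + PX P a b c (-x) = 1 := by
    rw [← hsum, sum_pm_eq_add_neg hx, PX, PX]
  have hterm : |PX P a b c x - 1 / 2| =
      1 / 2 * (|PX P a b c 1 - 1 / 2| + |PX P a b c (-1) - 1 / 2|) := by
    rw [← sum_pm_eq_add_neg (f := fun x => |PX P a b c x - 1 / 2|) (by simp [pm] : (1 : ℤ) ∈ pm),
      sum_pm_eq_add_neg hx, show PX P a b c (-x) - 1 / 2 = -(PX P a b c x - 1 / 2) by linarith,
      abs_neg]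
    ring
  rw [hterm]
  exact le_biSup_of_mem_finset (f := fun a =>
    1 / 2 * (|PX P a b c 1 - 1 / 2| + |PX P a b c (-1) - 1 / 2|)) ha

end NonSignalling

theorem statement0_general {C Z : Type} [Fintype Z] (N : ℕ)
    (P : ℕ → ℕ → C → ℤ → ℤ → Z → ℝ)
    (hpos : ∀ a ∈ SA N, ∀ b ∈ SB N, ∀ (c : C), ∀ x ∈ pm, ∀ y ∈ pm, ∀ z : Z,
      0 ≤ P a b c x y z)
    (hsum : ∀ a ∈ SA N, ∀ b ∈ SB N, ∀ c : C,
      ∑ x ∈ pm, ∑ y ∈ pm, ∑ z, P a b c x y z = 1)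
    (hNS1 : ∀ a ∈ SA N, ∀ b ∈ SB N, ∀ (c c' : C), ∀ x ∈ pm, ∀ y ∈ pm,
      PXY P a b c x y = PXY P a b c' x y)
    (hNS2 : ∀ a ∈ SA N, ∀ b ∈ SB N, ∀ b' ∈ SB N, ∀ (c : C), ∀ x ∈ pm, ∀ z : Z,
      ∑ y ∈ pm, P a b c x y z = ∑ y ∈ pm, P a b' c x y z)
    (hNS3 : ∀ a ∈ SA N, ∀ a' ∈ SA N, ∀ b ∈ SB N, ∀ (c : C), ∀ y ∈ pm, ∀ z : Z,
      ∑ x ∈ pm, P a b c x y z = ∑ x ∈ pm, P a' b c x y z) :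
    ∀ a ∈ SA N, ∀ b ∈ SB N, ∀ c : C, ∀ x ∈ pm, 0 < PX P a b c x →
      ∀ b₀ ∈ SB N, ∀ c₀ : C,
        varDist (PZcond P a b c x) (PZ P a b c) ≤ IN P N c₀ / 2 + biasN P N b₀ c₀ := by
  intro a ha b hb c x hx hp b₀ hb₀ c₀
  have hchain : varDist (PXZ P a b c x) (PXZ P a b c (-x)) ≤ IN P N c₀ / 2 := by
    rw [← chainNode_of_mem_SA hNS2 c hx ha hb, ← chainNode_of_mem_SA hNS2 c (neg_mem_pm hx) ha hb,
      IN_congr_right hNS1 (one_le_of_mem_SA ha) c₀ c]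
    exact varDist_chainNode_neg_le hpos hNS3 hNS2 c hx ha
  have hbayes : varDist (PZcond P a b c x) (PZ P a b c) ≤
      varDist (PXZ P a b c x) (PXZ P a b c (-x)) + |PX P a b c x - 1 / 2| := by
    have hPZ : PZ P a b c = fun z => PXZ P a b c x z + PXZ P a b c (-x) z :=
      funext fun z => sum_pm_eq_add_neg hx (fun x' => PXZ P a b c x' z)
    rw [hPZ]
    exact varDist_div_add_le (fun z => sum_nonneg fun y hy => hpos a ha b hb c x hx y hy z)
      (sum_PXZ_eq_PX a b c x) hp
  have hbias : |PX P a b c x - 1 / 2| ≤ biasN P N b₀ c₀ := by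
    rw [PX_congr hNS2 hNS1 ha hb hb₀ c c₀ hx]
    exact abs_PX_sub_half_le_biasN ha c₀ (hsum a ha b₀ hb₀ c₀) hx
  linarith

/-- For any non-signalling family of distributions `P_{XYZ|ABC}`, the
variational distance between `P_{Z|a,b,c,X=x}` and `P_{Z|a,b,c}` is at most
`I_N/2 + ν_N`. -/
theorem statement0 {C Z : Type} [Fintype Z] (N : ℕ) (hN : 1 ≤ N)
    (P : ℕ → ℕ → C → ℤ → ℤ → Z → ℝ)
    (hpos : ∀ a ∈ SA N, ∀ b ∈ SB N, ∀ (c : C), ∀ x ∈ pm, ∀ y ∈ pm, ∀ z : Z,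
      0 ≤ P a b c x y z)
    (hsum : ∀ a ∈ SA N, ∀ b ∈ SB N, ∀ c : C,
      ∑ x ∈ pm, ∑ y ∈ pm, ∑ z, P a b c x y z = 1)
    (hNS1 : ∀ a ∈ SA N, ∀ b ∈ SB N, ∀ (c c' : C), ∀ x ∈ pm, ∀ y ∈ pm,
      PXY P a b c x y = PXY P a b c' x y)
    (hNS2 : ∀ a ∈ SA N, ∀ b ∈ SB N, ∀ b' ∈ SB N, ∀ (c : C), ∀ x ∈ pm, ∀ z : Z,
      ∑ y ∈ pm, P a b c x y z = ∑ y ∈ pm, P a b' c x y z)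
    (hNS3 : ∀ a ∈ SA N, ∀ a' ∈ SA N, ∀ b ∈ SB N, ∀ (c : C), ∀ y ∈ pm, ∀ z : Z,
      ∑ x ∈ pm, P a b c x y z = ∑ x ∈ pm, P a' b c x y z) :
    ∀ a ∈ SA N, ∀ b ∈ SB N, ∀ c : C, ∀ x ∈ pm, 0 < PX P a b c x →
      ∀ b₀ ∈ SB N, ∀ c₀ : C,
        varDist (PZcond P a b c x) (PZ P a b c) ≤ IN P N c₀ / 2 + biasN P N b₀ c₀ :=
  statement0_general N P hpos hsum hNS1 hNS2 hNS3
end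
end

section
/- Let P be a probability distribution on pairs (x,z) with x ∈ {+1,−1} and z in a finite set, let P_X and P_Z be its marginals, and fix x with P_X(x) > 0. Then the variational distance between the conditional distribution P_{Z|X=x} (defined by P_{Z|X=x}(z) = P(x,z)/P_X(x)) and the marginal P_Z satisfies D(P_{Z|X=x}, P_Z) ≤ |P_X(x) − 1/2| + Σ_z |P(x,z) − (1/2)·P_Z(z)|. -/
/-! Insert `2·P(x,z)` between `P(x,z)/P_X(x)` and `P_Z(z)` by the triangle inequality: the first
gap sums over `z` to `P_X(x)·|1/P_X(x) - 2| = |1 - 2·P_X(x)|`, the second is twice the given sum. -/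

open Finset

theorem mul_abs_inv_sub_le {a : ℝ} (ha : 0 ≤ a) (c : ℝ) : a * |a⁻¹ - c| ≤ |1 - c * a| := by
  rcases ha.eq_or_lt with rfl | ha
  · simp
  · rw [← abs_of_pos ha, ← abs_mul, abs_of_pos ha, mul_sub, mul_inv_cancel₀ ha.ne', mul_comm]

theorem sum_abs_div_sum_sub_le {Z : Type*} [Fintype Z] {p : Z → ℝ} (hp : ∀ z, 0 ≤ p z)
    (q : Z → ℝ) (c : ℝ) :
    ∑ z, |p z / ∑ z', p z' - q z| ≤ |1 - c * ∑ z, p z| + ∑ z, |c * p z - q z| := by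
  set a := ∑ z, p z
  calc ∑ z, |p z / a - q z|
      ≤ ∑ z, (p z * |a⁻¹ - c| + |c * p z - q z|) := by
        gcongr with z
        calc |p z / a - q z| ≤ |p z / a - c * p z| + |c * p z - q z| := abs_sub_le _ _ _
          _ = p z * |a⁻¹ - c| + |c * p z - q z| := by
            rw [div_eq_mul_inv, mul_comm c, ← mul_sub, abs_mul, abs_of_nonneg (hp z)]
    _ = a * |a⁻¹ - c| + ∑ z, |c * p z - q z| := by rw [sum_add_distrib, ← sum_mul]
    _ ≤ |1 - c * a| + ∑ z, |c * p z - q z| := by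
        gcongr
        exact mul_abs_inv_sub_le (sum_nonneg fun z _ => hp z) c

theorem statement5_general {Z : Type} [Fintype Z]
    (P : ℤ → Z → ℝ)
    (hpos : ∀ x ∈ pm, ∀ z : Z, 0 ≤ P x z)
    (x : ℤ) (hx : x ∈ pm) :
    (1 / 2) * ∑ z, |P x z / (∑ z', P x z') - (∑ x' ∈ pm, P x' z)| ≤
      |(∑ z, P x z) - 1 / 2| + ∑ z, |P x z - (1 / 2) * (∑ x' ∈ pm, P x' z)| := by
  have h := sum_abs_div_sum_sub_le (hpos x hx) (fun z => ∑ x' ∈ pm, P x' z) 2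
  have h_mass : |1 - 2 * ∑ z, P x z| = 2 * |(∑ z, P x z) - 1 / 2| := by
    rw [← abs_two, ← abs_mul, abs_two, ← abs_neg]
    ring_nf
  have h_pointwise : ∑ z, |2 * P x z - ∑ x' ∈ pm, P x' z| =
      2 * ∑ z, |P x z - (1 / 2) * (∑ x' ∈ pm, P x' z)| := by
    rw [mul_sum]
    refine sum_congr rfl fun z _ => ?_
    rw [← abs_two, ← abs_mul, abs_two]
    ring_nf
  rw [h_mass, h_pointwise] at h
  linarith

/-- For a probability distribution `P` on pairs `(x, z)` with
`x ∈ {+1,-1}` and `z` in a finite set, with marginals `P_X` and `P_Z`, and any `x` with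
`P_X(x) > 0`, the variational distance between the conditional distribution `P_{Z|X=x}`
and the marginal `P_Z` satisfies
`D(P_{Z|X=x}, P_Z) ≤ |P_X(x) - 1/2| + ∑_z |P(x,z) - (1/2)·P_Z(z)|`. -/
theorem statement5 {Z : Type} [Fintype Z]
    (P : ℤ → Z → ℝ)
    (hpos : ∀ x ∈ pm, ∀ z : Z, 0 ≤ P x z)
    (hsum : ∑ x ∈ pm, ∑ z, P x z = 1)
    (x : ℤ) (hx : x ∈ pm)
    (hPX : 0 < ∑ z, P x z) :
    (1 / 2) * ∑ z, |P x z / (∑ z', P x z') - (∑ x' ∈ pm, P x' z)| ≤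
      |(∑ z, P x z) - 1 / 2| + ∑ z, |P x z - (1 / 2) * (∑ x' ∈ pm, P x' z)| :=
  statement5_general P hpos x hx
end

section
/- Let N ≥ 1. Let A₁ be the set of unit vectors (cos(m·π/N), sin(m·π/N), 0) in ℝ³ and A₂ the set of unit vectors (cos(m·π/N), 0, sin(m·π/N)), for m ∈ {0, 1, …, 2N−1} (measurement directions in two orthogonal planes sharing the first coordinate axis). Then for every unit vector z ∈ ℝ³, max over α ∈ A₁ ∪ A₂ of |⟨α, z⟩| ≥ (1/√2)·cos(π/(2N)). -/
/-!
Since `(z₀² + z₁²) + (z₀² + z₂²) = 1 + z₀² ≥ 1`, the projection of `z` to the xy-plane or to the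
xz-plane has length `r ≥ 1/√2`. Writing that projection in polar form `r (cos θ, sin θ)`, the inner
product with the `m`-th direction of the plane is `r cos (mπ/N - θ)`, and as the angles `mπ/N` are
spaced `π/N` apart around the circle, one of them lies within `π/(2N)` of `θ` modulo `2π`.
-/

open Real

lemma cos_le_abs_cos_of_abs_le {x δ : ℝ} (hδ : δ ≤ π) (hx : |x| ≤ δ) : cos δ ≤ |cos x| :=
  calc cos δ ≤ cos |x| := cos_le_cos_of_nonneg_of_le_pi (abs_nonneg x) hδ hx
    _ = cos x := cos_abs x
    _ ≤ |cos x| := le_abs_self _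

lemma exists_int_abs_mul_sub_le {h : ℝ} (hh : 0 < h) (φ : ℝ) : ∃ k : ℤ, |k * h - φ| ≤ h / 2 := by
  refine ⟨round (φ / h), ?_⟩
  calc |round (φ / h) * h - φ| = h * |φ / h - round (φ / h)| := by
        rw [← abs_of_pos hh, ← abs_mul, abs_of_pos hh, abs_sub_comm]
        congr 1
        field_simp
    _ ≤ h * (1 / 2) := by gcongr; exact abs_sub_round _
    _ = h / 2 := by ring

lemma cos_toNat_emod_mul_pi_div_sub {N : ℕ} (hN : 0 < N) (k : ℤ) (φ : ℝ) :
    cos (((k % (2 * N)).toNat : ℝ) * π / N - φ) = cos (k * π / N - φ) := by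
  have hm : (((k % (2 * N)).toNat : ℤ) : ℝ) = k - 2 * N * (k / (2 * N) : ℤ) := by
    rw [Int.toNat_of_nonneg (Int.emod_nonneg k (by omega)), Int.emod_def]
    push_cast
    ring
  push_cast at hm
  rw [hm, ← cos_sub_int_mul_two_pi (k * π / N - φ) (k / (2 * N))]
  congr 1
  field_simp
  ring

lemma pi_div_two_mul_le_pi_div_two {N : ℕ} (hN : 0 < N) : π / (2 * N) ≤ π / 2 := by
  have : (1 : ℝ) ≤ N := by exact_mod_cast hN
  exact div_le_div_of_nonneg_left pi_pos.le two_pos (by linarith)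

lemma exists_lt_cos_pi_div_le_abs_cos_sub {N : ℕ} (hN : 0 < N) (φ : ℝ) :
    ∃ m < 2 * N, cos (π / (2 * N)) ≤ |cos (m * π / N - φ)| := by
  have hN' : (0 : ℝ) < N := by exact_mod_cast hN
  obtain ⟨k, hk⟩ := exists_int_abs_mul_sub_le (div_pos pi_pos hN') φ
  refine ⟨(k % (2 * N)).toNat, ?_, ?_⟩
  · have := Int.emod_lt_of_pos k (show (0 : ℤ) < 2 * N by omega)
    omega
  · rw [cos_toNat_emod_mul_pi_div_sub hN]
    refine cos_le_abs_cos_of_abs_le ?_ ?_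
    · linarith [pi_div_two_mul_le_pi_div_two hN, pi_pos]
    · rwa [show (k : ℝ) * π / N = k * (π / N) by ring, show π / (2 * N) = π / N / 2 by ring]

lemma exists_lt_sqrt_mul_cos_pi_div_le_abs {N : ℕ} (hN : 0 < N) (a b : ℝ) :
    ∃ m < 2 * N, √(a ^ 2 + b ^ 2) * cos (π / (2 * N)) ≤
      |cos (m * π / N) * a + sin (m * π / N) * b| := by
  set w : ℂ := ⟨a, b⟩
  obtain ⟨m, hm, hcos⟩ := exists_lt_cos_pi_div_le_abs_cos_sub hN (Complex.arg w)
  refine ⟨m, hm, ?_⟩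
  have hpolar : cos (m * π / N) * a + sin (m * π / N) * b = ‖w‖ * cos (m * π / N - Complex.arg w) := by
    have ha : ‖w‖ * cos w.arg = a := w.norm_mul_cos_arg
    have hb : ‖w‖ * sin w.arg = b := w.norm_mul_sin_arg
    rw [cos_sub, ← ha, ← hb]
    ring
  rw [hpolar, abs_mul, abs_norm, Complex.norm_eq_sqrt_sq_add_sq]
  exact mul_le_mul_of_nonneg_left hcos (sqrt_nonneg _)

/-- Consider the `2N` chained measurement directions
`(cos(m·π/N), sin(m·π/N), 0)` in the xy-plane and the `2N` directions
`(cos(m·π/N), 0, sin(m·π/N))` in the xz-plane, `m ∈ {0, …, 2N-1}`.  For every unit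
vector `z = (z₀, z₁, z₂) ∈ ℝ³`, the maximum over all these directions `α` of the
absolute standard inner product `|⟨α, z⟩|` is at least `(1/√2)·cos(π/(2N))`. -/
theorem statement15 (N : ℕ) (hN : 1 ≤ N) (z₀ z₁ z₂ : ℝ)
    (hz : z₀ ^ 2 + z₁ ^ 2 + z₂ ^ 2 = 1) :
    (1 / Real.sqrt 2) * Real.cos (Real.pi / (2 * N)) ≤
      (Finset.range (2 * N)).sup' (Finset.nonempty_range_iff.mpr (by omega))
        (fun m =>
          max |Real.cos (m * Real.pi / N) * z₀ + Real.sin (m * Real.pi / N) * z₁|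
              |Real.cos (m * Real.pi / N) * z₀ + Real.sin (m * Real.pi / N) * z₂|) := by
  have hcos : 0 ≤ cos (π / (2 * N)) := cos_nonneg_of_mem_Icc
    ⟨by linarith [pi_pos, div_nonneg pi_pos.le (by positivity : (0 : ℝ) ≤ 2 * N)],
      pi_div_two_mul_le_pi_div_two hN⟩
  have hplane (b : ℝ) (hb : 1 / 2 ≤ z₀ ^ 2 + b ^ 2) : ∃ m < 2 * N, 1 / √2 * cos (π / (2 * N)) ≤
      |cos (m * π / N) * z₀ + sin (m * π / N) * b| := by
    obtain ⟨m, hm, hle⟩ := exists_lt_sqrt_mul_cos_pi_div_le_abs hN z₀ b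
    refine ⟨m, hm, le_trans ?_ hle⟩
    rw [one_div, ← sqrt_inv, ← one_div]
    gcongr
  have hhalf : 1 / 2 ≤ z₀ ^ 2 + z₁ ^ 2 ∨ 1 / 2 ≤ z₀ ^ 2 + z₂ ^ 2 := by
    by_contra! h
    nlinarith [sq_nonneg z₀]
  rcases hhalf with h | h
  · obtain ⟨m, hm, hle⟩ := hplane z₁ h
    exact Finset.le_sup'_of_le _ (Finset.mem_range.mpr hm) (hle.trans (le_max_left _ _))
  · obtain ⟨m, hm, hle⟩ := hplane z₂ h
    exact Finset.le_sup'_of_le _ (Finset.mem_range.mpr hm) (hle.trans (le_max_right _ _))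
end
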